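/- Let L be a first-order language, let t and u be L-terms with variables in a finite type α, and define, for an assignment v : α → ℕ, evalSize(t, v) = size(t) + ∑ₓ occ(x, t) · v(x) (and similarly for u). If evalSize(u, v) ≥ evalSize(t, v) for every assignment v : α → ℕ, then for every substitution θ assigning a ground L-term to each variable in α, size(u·θ) ≥ size(t·θ). -/
import Mathlib


open FirstOrder

/-- The size of a first-order term: variables have size 0, and a function symbol of arity
`m` applied to terms `t₁,…,tₘ` has size `m + size t₁ + ⋯ + size tₘ`. -/
def termSize {L : FirstOrder.Language} {α : Type*} : L.Term α → ℕ
  | FirstOrder.Language.Term.var _ => 0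
  | FirstOrder.Language.Term.func (l := l) _ ts => l + ∑ i, termSize (ts i)

/-- The number of occurrences of the variable `x` in a first-order term. -/
def occ {L : FirstOrder.Language} {α : Type*} [DecidableEq α] (x : α) : L.Term α → ℕ
  | FirstOrder.Language.Term.var y => if y = x then 1 else 0
  | FirstOrder.Language.Term.func _ ts => ∑ i, occ x (ts i)

/-- The symbolic size of a term under an assignment `v` of non-negative integer values to
its variables: `evalSize(t, v) = size(t) + ∑ₓ occ(x, t) · v(x)`. -/
def evalSize {L : FirstOrder.Language} {α : Type*} [Fintype α] [DecidableEq α]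
    (t : L.Term α) (v : α → ℕ) : ℕ :=
  termSize t + ∑ x : α, occ x t * v x

lemma termSize_subst_eq {L : FirstOrder.Language} {α : Type*} [Fintype α] [DecidableEq α]
    (t : L.Term α) (θ : α → L.Term Empty) :
    termSize (t.subst θ) = evalSize t (fun x => termSize (θ x)) := by
  induction t with
  | var y =>
      simp [FirstOrder.Language.Term.subst, evalSize, termSize, occ,
        Finset.sum_ite_eq' Finset.univ y (fun x => termSize (θ x))]
  | func f ts ih =>
      simp only [FirstOrder.Language.Term.subst, evalSize, termSize, occ]
      simp only [fun i => ih i, evalSize]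
      simp only [Finset.sum_add_distrib, Finset.sum_mul, add_assoc]
      congr 2
      exact Finset.sum_comm

/-- If the symbolic size inequality `evalSize(t, v) ≤ evalSize(u, v)` holds for every
assignment `v` of non-negative integer values to the variables, then for every ground
substitution `θ`, `size(t·θ) ≤ size(u·θ)`. -/
theorem termSize_subst_le_of_evalSize_le {L : FirstOrder.Language} {α : Type*}
    [Fintype α] [DecidableEq α] (t u : L.Term α)
    (h : ∀ v : α → ℕ, evalSize t v ≤ evalSize u v)
    (θ : α → L.Term Empty) :
    termSize (t.subst θ) ≤ termSize (u.subst θ) := by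
  rw [termSize_subst_eq, termSize_subst_eq]; exact h _
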